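/- arXiv:1307.5271 — 4 statements merged into one kernel-verified Lean document; each statement's English description precedes it below -/
import Mathlib

section
/- Let (T, 𝓣, λ) be a probability space, 𝓕 a sub-σ-algebra, and A a compact metric space. Let g : T → 𝓜(A) be 𝓕-measurable and f : T → A be 𝓣-measurable. Suppose that for every E ∈ 𝓕 and every Borel set B ⊆ A, λ(E ∩ f⁻¹(B)) = ∫_E g(t)(B) dλ(t). Then f(t) ∈ supp g(t) for λ-almost every t ∈ T. -/
open MeasureTheory

/-- The topological support of a Borel measure. -/
def msupport {A : Type*} [TopologicalSpace A] [MeasurableSpace A] (μ : Measure A) : Set A :=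
  {x | ∀ U : Set A, IsOpen U → x ∈ U → 0 < μ U}

open TopologicalSpace

/-!
If `f t` lies outside the support of `g t`, some set `U` of a countable basis of `A` contains
`f t` and is `g t`-null. For fixed `U`, the set `E = {t | g t U = 0}` is `F`-measurable, so the
hypothesis gives `λ(E ∩ f⁻¹ U) = ∫_E g t U dλ = 0`; a countable union of null sets is null.
-/

lemma exists_mem_basis_measure_eq_zero_of_notMem_msupport {A : Type*} [TopologicalSpace A]
    [MeasurableSpace A] {μ : Measure A} {b : Set (Set A)} (hb : IsTopologicalBasis b) {x : A}
    (hx : x ∉ msupport μ) : ∃ U ∈ b, x ∈ U ∧ μ U = 0 := by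
  simp only [msupport, Set.mem_ofPred_eq, not_forall, not_lt, nonpos_iff_eq_zero] at hx
  obtain ⟨V, hVo, hxV, hV⟩ := hx
  obtain ⟨U, hUb, hxU, hUV⟩ := hb.exists_subset_of_mem_open hxV hVo
  exact ⟨U, hUb, hxU, measure_mono_null hUV hV⟩

lemma measure_inter_preimage_eq_zero_of_setLIntegral {T A : Type*} {F : MeasurableSpace T}
    {mT : MeasurableSpace T} [MeasurableSpace A] {lam : Measure T} (hF : F ≤ mT)
    {g : T → Measure A} {f : T → A} {B : Set A} (hgB : Measurable[F] fun t => g t B)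
    (heq : ∀ E : Set T, MeasurableSet[F] E → lam (E ∩ f ⁻¹' B) = ∫⁻ t in E, g t B ∂lam) :
    lam ({t | g t B = 0} ∩ f ⁻¹' B) = 0 := by
  have hE : MeasurableSet[F] {t | g t B = 0} := hgB (measurableSet_singleton 0)
  rw [heq _ hE, setLIntegral_congr_fun (hF _ hE) fun t (ht : g t B = 0) => ht,
    lintegral_zero]

theorem stmt2_general {T A : Type*} [mT : MeasurableSpace T]
    [MetricSpace A] [CompactSpace A] [mA : MeasurableSpace A] [BorelSpace A]
    (lam : Measure T)
    (F : MeasurableSpace T) (hF : F ≤ mT)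
    (g : T → Measure A)
    (hgm : ∀ B : Set A, MeasurableSet B → Measurable[F] fun t => g t B)
    (f : T → A)
    (heq : ∀ E : Set T, MeasurableSet[F] E → ∀ B : Set A, MeasurableSet B →
      lam (E ∩ f ⁻¹' B) = ∫⁻ t in E, g t B ∂lam) :
    ∀ᵐ t ∂lam, f t ∈ msupport (g t) := by
  obtain ⟨b, hbc, -, hb⟩ := exists_countable_basis A
  have hnull : ∀ U ∈ b, lam ({t | g t U = 0} ∩ f ⁻¹' U) = 0 := fun U hU =>
    have hU := (hb.isOpen hU).measurableSet
    measure_inter_preimage_eq_zero_of_setLIntegral hF (hgm U hU) fun E hE => heq E hE U hU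
  refine measure_mono_null (fun t ht => ?_) ((measure_biUnion_null_iff hbc).2 hnull)
  obtain ⟨U, hUb, hfU, hU⟩ := exists_mem_basis_measure_eq_zero_of_notMem_msupport hb ht
  exact Set.mem_biUnion hUb ⟨hU, hfU⟩

theorem stmt2 {T A : Type*} [mT : MeasurableSpace T]
    [MetricSpace A] [CompactSpace A] [mA : MeasurableSpace A] [BorelSpace A]
    (lam : Measure T) [IsProbabilityMeasure lam]
    (F : MeasurableSpace T) (hF : F ≤ mT)
    (g : T → Measure A) (hg : ∀ t, IsProbabilityMeasure (g t))
    (hgm : ∀ B : Set A, MeasurableSet B → Measurable[F] fun t => g t B)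
    (f : T → A) (hf : Measurable[mT, mA] f)
    (heq : ∀ E : Set T, MeasurableSet[F] E → ∀ B : Set A, MeasurableSet B →
      lam (E ∩ f ⁻¹' B) = ∫⁻ t in E, g t B ∂lam) :
    ∀ᵐ t ∂lam, f t ∈ msupport (g t) :=
  stmt2_general (mT := mT) (mA := mA) lam F hF g hgm f heq
end

section
/- Let (T, 𝓣, λ) be a probability space, 𝓕 a sub-σ-algebra of 𝓣, and A a compact metric space. Let g : T → 𝓜(A) be 𝓕-measurable. Then the map c : T × A → ℝ defined by c(t,a) = 1 if a ∈ supp g(t) and 0 otherwise is 𝓕 ⊗ 𝓑(A)-measurable. -/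
/-!
A point lies outside the support of a measure iff some basic open neighbourhood of it is null.
With a countable basis, the complement of the support graph is therefore the countable union of
the measurable rectangles `{t | g t U = 0} ×ˢ U` over basic open sets `U`.
-/

open MeasureTheory

open TopologicalSpace

theorem TopologicalSpace.IsTopologicalBasis.notMem_msupport_iff {A : Type*} [TopologicalSpace A]
    [MeasurableSpace A] {B : Set (Set A)} (hB : IsTopologicalBasis B) (μ : Measure A) (a : A) :
    a ∉ msupport μ ↔ ∃ U ∈ B, a ∈ U ∧ μ U = 0 := by
  simp only [msupport, Set.mem_ofPred_eq, not_forall, pos_iff_ne_zero, not_not, exists_prop]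
  constructor
  · rintro ⟨U, hU, haU, hμU⟩
    obtain ⟨V, hVB, haV, hVU⟩ := hB.exists_subset_of_mem_open haU hU
    exact ⟨V, hVB, haV, measure_mono_null hVU hμU⟩
  · rintro ⟨U, hUB, haU, hμU⟩
    exact ⟨U, hB.isOpen hUB, haU, hμU⟩

theorem measurableSet_setOf_mem_msupport {T A : Type*} {mT : MeasurableSpace T}
    [TopologicalSpace A] [SecondCountableTopology A] [MeasurableSpace A] [OpensMeasurableSpace A]
    {g : T → Measure A} (hg : ∀ U : Set A, IsOpen U → Measurable fun t => g t U) :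
    MeasurableSet {p : T × A | p.2 ∈ msupport (g p.1)} := by
  have hcompl : {p : T × A | p.2 ∈ msupport (g p.1)}ᶜ =
      ⋃ U ∈ countableBasis A, {t | g t U = 0} ×ˢ U := by
    ext ⟨t, a⟩
    simp only [Set.mem_compl_iff, Set.mem_ofPred_eq,
      (isBasis_countableBasis A).notMem_msupport_iff, Set.mem_iUnion, Set.mem_prod, exists_prop]
    exact exists_congr fun U => and_congr_right fun _ => and_comm
  refine .of_compl (hcompl ▸ .biUnion (countable_countableBasis A) fun U hU => ?_)
  have hUopen : IsOpen U := (isBasis_countableBasis A).isOpen hU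
  exact (hg U hUopen (measurableSet_singleton 0)).prod hUopen.measurableSet

theorem stmt3_general {T A : Type*}
    [MetricSpace A] [CompactSpace A] [mA : MeasurableSpace A] [BorelSpace A]
    (F : MeasurableSpace T)
    (g : T → Measure A)
    (hgm : ∀ B : Set A, MeasurableSet B → Measurable[F] fun t => g t B) :
    Measurable[F.prod mA] ({p : T × A | p.2 ∈ msupport (g p.1)}.indicator fun _ => (1 : ℝ)) :=
  measurable_const.indicator <|
    measurableSet_setOf_mem_msupport fun U hU => hgm U hU.measurableSet

theorem stmt3 {T A : Type*} [mT : MeasurableSpace T]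
    [MetricSpace A] [CompactSpace A] [mA : MeasurableSpace A] [BorelSpace A]
    (lam : Measure T) [IsProbabilityMeasure lam]
    (F : MeasurableSpace T) (hF : F ≤ mT)
    (g : T → Measure A) (hg : ∀ t, IsProbabilityMeasure (g t))
    (hgm : ∀ B : Set A, MeasurableSet B → Measurable[F] fun t => g t B) :
    Measurable[F.prod mA] ({p : T × A | p.2 ∈ msupport (g p.1)}.indicator fun _ => (1 : ℝ)) :=
  stmt3_general (mA := mA) F g hgm
end

section
/- Let A₁, …, Aₙ be compact metric spaces, (Tᵢ, 𝓕ᵢ, λᵢ) probability spaces, and uᵢ : (∏ⱼ Aⱼ) × Tᵢ → ℝ be 𝓑(∏ Aⱼ) ⊗ 𝓕ᵢ-measurable, continuous in the action profile for each fixed tᵢ, and dominated by an integrable function hᵢ on Tᵢ. Define Fᵢ(tᵢ, aᵢ, τ₁, …, τₙ) = ∫_{A_{-i}} uᵢ(aᵢ, a_{-i}, tᵢ) d(⊗_{j≠i} τⱼ)(a_{-i}) for probability measures τⱼ ∈ 𝓜(Aⱼ). Then for each fixed tᵢ, Fᵢ(tᵢ, ·, ·) is jointly continuous on Aᵢ ×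 ∏ⱼ 𝓜(Aⱼ), where each 𝓜(Aⱼ) carries the topology of weak convergence. -/
/-!
Integration against a probability measure is 1-Lipschitz in the bounded continuous integrand and,
by definition of the weak topology, continuous in the measure; together these give joint
continuity of `(f, μ) ↦ ∫ f dμ`. For compact `X`, a continuous `g : Y × X → ℝ` curries to a
continuous map `Y → C(X, ℝ)` into the sup-norm space, so `(y, μ) ↦ ∫ g (y, ·) dμ` is continuous.
The theorem is the case `Y = Aᵢ`, `X = A₋ᵢ`, precomposed with the continuous map
`(τⱼ)ⱼ ↦ ⊗_{j ≠ i} τⱼ`.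
-/

open MeasureTheory
open scoped BoundedContinuousFunction

theorem BoundedContinuousFunction.continuous_integral_prod_probabilityMeasure
    {X : Type*} [TopologicalSpace X] [MeasurableSpace X] [OpensMeasurableSpace X] :
    Continuous fun p : (X →ᵇ ℝ) × ProbabilityMeasure X => ∫ x, p.1 x ∂(p.2 : Measure X) := by
  apply continuous_prod_of_continuous_lipschitzWith _ 1
  · exact fun f => ProbabilityMeasure.continuous_integral_boundedContinuousFunction f
  · refine fun μ => LipschitzWith.of_dist_le_mul fun f g => ?_
    rw [NNReal.coe_one, one_mul, Real.dist_eq, ← integral_sub (f.integrable _) (g.integrable _),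
      dist_eq_norm]
    exact (f - g).norm_integral_le_norm (μ : Measure X)

theorem continuous_integral_prod_probabilityMeasure_of_compactSpace
    {Y X : Type*} [TopologicalSpace Y] [TopologicalSpace X] [CompactSpace X]
    [MeasurableSpace X] [OpensMeasurableSpace X] {g : Y × X → ℝ} (hg : Continuous g) :
    Continuous fun p : Y × ProbabilityMeasure X => ∫ x, g (p.1, x) ∂(p.2 : Measure X) := by
  have hcurry : Continuous fun y => BoundedContinuousFunction.mkOfCompact
      (ContinuousMap.curry ⟨g, hg⟩ y) :=
    (ContinuousMap.isometryEquivBoundedOfCompact X ℝ).continuous.comp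
      (ContinuousMap.curry ⟨g, hg⟩).continuous
  exact BoundedContinuousFunction.continuous_integral_prod_probabilityMeasure.comp
    ((hcurry.comp continuous_fst).prodMk continuous_snd)

theorem stmt8_general {n : ℕ}
    (A : Fin n → Type*) [∀ j, MetricSpace (A j)] [∀ j, CompactSpace (A j)]
    [mA : ∀ j, MeasurableSpace (A j)] [∀ j, BorelSpace (A j)]
    {T : Type*}
    (i : Fin n) (t : T)
    (u : (∀ j, A j) × T → ℝ)
    (huc : Continuous fun a : ∀ j, A j => u (a, t)) :
    Continuous fun p : A i × (∀ j, ProbabilityMeasure (A j)) =>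
      ∫ b : ∀ j : {j : Fin n // j ≠ i}, A j.1,
        u ((fun j => if hj : j = i then hj ▸ p.1 else b ⟨j, hj⟩), t)
          ∂(Measure.pi fun j : {j : Fin n // j ≠ i} => (p.2 j.1 : Measure (A j.1))) := by
  have hpayoff : Continuous fun q : A i × (∀ j : {j : Fin n // j ≠ i}, A j.1) =>
      u ((Homeomorph.piSplitAt i A).symm q, t) :=
    huc.comp (Homeomorph.piSplitAt i A).symm.continuous
  have hopponents : Continuous fun μ : ∀ j, ProbabilityMeasure (A j) =>
      ProbabilityMeasure.pi fun j : {j : Fin n // j ≠ i} => μ j.1 :=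
    ProbabilityMeasure.continuous_pi.comp (continuous_pi fun j => continuous_apply j.1)
  exact (continuous_integral_prod_probabilityMeasure_of_compactSpace hpayoff).comp
    (continuous_fst.prodMk (hopponents.comp continuous_snd))

theorem stmt8 {n : ℕ}
    (A : Fin n → Type*) [∀ j, MetricSpace (A j)] [∀ j, CompactSpace (A j)]
    [mA : ∀ j, MeasurableSpace (A j)] [∀ j, BorelSpace (A j)]
    {T : Type*} [MeasurableSpace T]
    (i : Fin n) (t : T)
    (u : (∀ j, A j) × T → ℝ)
    (huc : Continuous fun a : ∀ j, A j => u (a, t)) :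
    Continuous fun p : A i × (∀ j, ProbabilityMeasure (A j)) =>
      ∫ b : ∀ j : {j : Fin n // j ≠ i}, A j.1,
        u ((fun j => if hj : j = i then hj ▸ p.1 else b ⟨j, hj⟩), t)
          ∂(Measure.pi fun j : {j : Fin n // j ≠ i} => (p.2 j.1 : Measure (A j.1))) :=
  stmt8_general A (mA := mA) i t u huc
end

section
/- Let (Tᵢ, 𝓣ᵢ, λᵢ), i = 1,…,n, be probability spaces, Aᵢ compact metric spaces, and suppose Assumptions hold: uᵢ : A × Tᵢ → ℝ is 𝓑(A) ⊗ 𝓕ᵢ-measurable, continuous in a, dominated by integrable hᵢ, where 𝓕ᵢ ⊆ 𝓣ᵢ is countably generated, λ = ⊗ λᵢ, and each 𝓣ᵢ is atomless and nowhere equivalent to 𝓕ᵢ. If g = (g₁,…,gₙ) is an 𝓕-measurable mixed strategy equilibrium and f = (f₁,…,fₙ) is a pure strategy profile universally distribution equivalent to g, then f is a pure strategy equilibrium: for every i and every 𝓣ᵢ-measurable f̃ᵢ : Tᵢ → Aᵢ, Uᵢ(f̃ᵢ, f_{-i}) ≤ Uᵢ(f). -/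
/-!
Expected payoffs can be written as integrals against the product over players of the joint
type–action laws `λⱼ ⊗ σⱼ`. Player `i`'s payoff `uᵢ(a, tᵢ)` sees `tᵢ` only through `𝓕ᵢ` and
ignores `tⱼ` for `j ≠ i`, so as a function of the type–action profile it is measurable for
`⨂ⱼ (𝓕ⱼ ⊗ 𝓑(Aⱼ))`. Hence `Uᵢ` depends on each `σⱼ` only through the restriction of `λⱼ ⊗ σⱼ` to
`𝓕ⱼ ⊗ 𝓑(Aⱼ)`, and this restriction is exactly what universal distribution equivalence fixes.
Swapping `g` for `f`, with or without a deviation of player `i`, therefore leaves `Uᵢ` unchanged,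
and the equilibrium inequality for `g` becomes the one for `f`.
-/

open MeasureTheory ProbabilityTheory Function Set

namespace MeasurableEquiv

def piProdEquivProdPi {ι : Type*} (X Y : ι → Type*) [∀ j, MeasurableSpace (X j)]
    [∀ j, MeasurableSpace (Y j)] : (∀ j, X j × Y j) ≃ᵐ (∀ j, X j) × (∀ j, Y j) where
  __ := Equiv.arrowProdEquivProdArrow ι X Y
  measurable_toFun := by dsimp [Equiv.arrowProdEquivProdArrow]; fun_prop
  measurable_invFun := by dsimp [Equiv.arrowProdEquivProdArrow]; fun_prop

end MeasurableEquiv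

theorem MeasurableSpace.prod_mono_left {α β : Type*} {m m' : MeasurableSpace α}
    (mβ : MeasurableSpace β) (hm : m ≤ m') : m.prod mβ ≤ m'.prod mβ :=
  sup_le_sup (MeasurableSpace.comap_mono hm) le_rfl

theorem MeasurableSpace.pi_mono {ι : Type*} {X : ι → Type*} {m m' : ∀ j, MeasurableSpace (X j)}
    (hm : ∀ j, m j ≤ m' j) : MeasurableSpace.pi (m := m) ≤ MeasurableSpace.pi (m := m') :=
  iSup_mono fun j => MeasurableSpace.comap_mono (hm j)

namespace MeasureTheory

theorem lintegral_fintype_prod_eq_prod {ι : Type*} [Fintype ι] {T : ι → Type*}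
    [∀ j, MeasurableSpace (T j)] (μ : ∀ j, Measure (T j)) [∀ j, IsProbabilityMeasure (μ j)]
    {f : ∀ j, T j → ENNReal} (hf : ∀ j, Measurable (f j)) :
    ∫⁻ t, ∏ j, f j (t j) ∂(Measure.pi μ) = ∏ j, ∫⁻ x, f j x ∂(μ j) := by
  rw [lintegral_prod_eq_prod_lintegral_of_indepFun _ _
    (iIndepFun_pi fun j => (hf j).aemeasurable) fun j => (hf j).comp (measurable_pi_apply j)]
  exact Finset.prod_congr rfl fun j _ => (measurePreserving_eval μ j).lintegral_comp (hf j)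

theorem Integrable.comp_fst_compProd {α β : Type*} [MeasurableSpace α] [MeasurableSpace β]
    {μ : Measure α} [SFinite μ] {κ : Kernel α β} [IsMarkovKernel κ] {H : α → ℝ}
    (hH : Integrable H μ) : Integrable (fun p => H p.1) (μ ⊗ₘ κ) :=
  Integrable.comp_measurable (by rwa [← Measure.fst, Measure.fst_compProd]) measurable_fst

namespace Measure

-- Here and below the sub-σ-algebra `m` is bound before the ambient one, which therefore is the
-- instance that elaboration picks up.
theorem trim_pi {ι : Type*} [Fintype ι] {X : ι → Type*} {m : ∀ j, MeasurableSpace (X j)}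
    [m0 : ∀ j, MeasurableSpace (X j)] (hm : ∀ j, m j ≤ m0 j) (μ : ∀ j, Measure (X j))
    [∀ j, IsFiniteMeasure (μ j)] :
    (Measure.pi μ).trim (MeasurableSpace.pi_mono hm)
      = @Measure.pi ι X _ m fun j => (μ j).trim (hm j) := by
  have (j : ι) : SigmaFinite ((μ j).trim (hm j)) :=
    @IsFiniteMeasure.toSigmaFinite _ (m j) _ (isFiniteMeasure_trim (hm j))
  refine (@Measure.pi_eq ι X _ m _ _ _ fun s hs => ?_).symm
  rw [trim_measurableSet_eq _ (@MeasurableSet.univ_pi ι X m _ _ hs), Measure.pi_pi]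
  exact Finset.prod_congr rfl fun j _ => (trim_measurableSet_eq _ (hs j)).symm

theorem trim_prod_eq_of_forall_prod_eq {α β : Type*} {m : MeasurableSpace α}
    [mα : MeasurableSpace α] [mβ : MeasurableSpace β] (hm : m ≤ mα) {ρ ρ' : Measure (α × β)}
    [IsFiniteMeasure ρ]
    (h : ∀ E, MeasurableSet[m] E → ∀ B, MeasurableSet B → ρ (E ×ˢ B) = ρ' (E ×ˢ B)) :
    ρ.trim (MeasurableSpace.prod_mono_left mβ hm)
      = ρ'.trim (MeasurableSpace.prod_mono_left mβ hm) := by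
  have hprod : ∀ E, MeasurableSet[m] E → ∀ B, MeasurableSet B →
      MeasurableSet[m.prod mβ] (E ×ˢ B) := fun E hE B hB => @MeasurableSet.prod _ _ m mβ _ _ hE hB
  refine @ext_of_generate_finite _ (m.prod mβ) _ _
    (image2 (· ×ˢ ·) {E | MeasurableSet[m] E} {B | MeasurableSet B})
    (@generateFrom_prod _ _ m mβ).symm (@isPiSystem_prod _ _ m mβ) _ ?_ ?_
  · rintro _ ⟨E, hE, B, hB, rfl⟩
    rw [trim_measurableSet_eq _ (hprod E hE B hB), trim_measurableSet_eq _ (hprod E hE B hB)]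
    exact h E hE B hB
  · rw [← univ_prod_univ, trim_measurableSet_eq _ (hprod _ .univ _ .univ),
      trim_measurableSet_eq _ (hprod _ .univ _ .univ)]
    exact h _ .univ _ .univ

end Measure

end MeasureTheory

namespace ProbabilityTheory.Kernel

section Pi

variable {ι : Type*} {T A : ι → Type*} [∀ j, MeasurableSpace (T j)] [∀ j, MeasurableSpace (A j)]

theorem coe_update [DecidableEq ι] (κ : ∀ j, Kernel (T j) (A j)) (i : ι)
    (τ : Kernel (T i) (A i)) :
    (fun j => ⇑(update κ i τ j)) = update (fun j => ⇑(κ j)) i ⇑τ :=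
  funext fun j => apply_update (fun j (κ : Kernel (T j) (A j)) => ⇑κ) κ i τ j

instance isMarkovKernel_update [DecidableEq ι] (κ : ∀ j, Kernel (T j) (A j))
    [∀ j, IsMarkovKernel (κ j)] (i : ι) (τ : Kernel (T i) (A i)) [IsMarkovKernel τ] (j : ι) :
    IsMarkovKernel (update κ i τ j) := by
  rcases eq_or_ne j i with rfl | hj
  · rwa [update_self]
  · rw [update_of_ne hj]; infer_instance

variable [Fintype ι]

theorem measurable_measure_pi (κ : ∀ j, Kernel (T j) (A j)) [∀ j, IsMarkovKernel (κ j)] :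
    Measurable fun t : ∀ j, T j => Measure.pi fun j => κ j (t j) := by
  refine Measure.measurable_of_measurable_coe _ fun s hs => ?_
  refine MeasurableSpace.induction_on_inter generateFrom_pi.symm isPiSystem_pi (by simp)
    ?_ ?_ ?_ s hs
  · rintro _ ⟨B, hB, rfl⟩
    simp only [Measure.pi_pi]
    exact Finset.measurable_prod _ fun j _ =>
      ((κ j).measurable_coe (hB j trivial)).comp (measurable_pi_apply j)
  · intro s hs ih
    simp only [prob_compl_eq_one_sub hs]
    exact ih.const_sub 1
  · intro s hdisj hs ih
    simp only [measure_iUnion hdisj hs]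
    exact Measurable.tsum ih

noncomputable def pi (κ : ∀ j, Kernel (T j) (A j)) [∀ j, IsMarkovKernel (κ j)] :
    Kernel (∀ j, T j) (∀ j, A j) where
  toFun t := Measure.pi fun j => κ j (t j)
  measurable' := measurable_measure_pi κ

variable (κ : ∀ j, Kernel (T j) (A j)) [∀ j, IsMarkovKernel (κ j)]

theorem pi_apply (t : ∀ j, T j) : Kernel.pi κ t = Measure.pi fun j => κ j (t j) := rfl

instance : IsMarkovKernel (Kernel.pi κ) := ⟨fun t => by rw [pi_apply]; infer_instance⟩

end Pi

theorem setLIntegral_deterministic_apply {α β : Type*} [MeasurableSpace α] [MeasurableSpace β]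
    {f : α → β} (hf : Measurable f) (μ : Measure α) [SFinite μ] {E : Set α} (hE : MeasurableSet E)
    {B : Set β} (hB : MeasurableSet B) :
    ∫⁻ t in E, deterministic f hf t B ∂μ = μ (E ∩ f ⁻¹' B) := by
  rw [← Measure.compProd_apply_prod hE hB, Measure.compProd_deterministic,
    Measure.map_apply (by fun_prop) (hE.prod hB), mk_preimage_prod]
  rfl

def UniversallyDistributionEquivalent {α β : Type*} (m : MeasurableSpace α) [MeasurableSpace α]
    [MeasurableSpace β] (μ : Measure α) (κ κ' : Kernel α β) : Prop :=
  ∀ E, MeasurableSet[m] E → ∀ B, MeasurableSet B → ∫⁻ t in E, κ t B ∂μ = ∫⁻ t in E, κ' t B ∂μ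

theorem UniversallyDistributionEquivalent.trim_compProd_eq {α β : Type*}
    {m : MeasurableSpace α} [mα : MeasurableSpace α] [mβ : MeasurableSpace β] (hm : m ≤ mα)
    {μ : Measure α} [IsFiniteMeasure μ] {κ κ' : Kernel α β} [IsMarkovKernel κ]
    [IsMarkovKernel κ'] (h : UniversallyDistributionEquivalent m μ κ κ') :
    (μ ⊗ₘ κ).trim (MeasurableSpace.prod_mono_left mβ hm)
      = (μ ⊗ₘ κ').trim (MeasurableSpace.prod_mono_left mβ hm) :=
  Measure.trim_prod_eq_of_forall_prod_eq hm fun E hE B hB => by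
    rw [Measure.compProd_apply_prod (hm E hE) hB, Measure.compProd_apply_prod (hm E hE) hB]
    exact h E hE B hB

theorem universallyDistributionEquivalent_update {ι : Type*} [DecidableEq ι] {T A : ι → Type*}
    {m : ∀ j, MeasurableSpace (T j)} [∀ j, MeasurableSpace (T j)] [∀ j, MeasurableSpace (A j)]
    {μ : ∀ j, Measure (T j)} {κ κ' : ∀ j, Kernel (T j) (A j)}
    (h : ∀ j, UniversallyDistributionEquivalent (m j) (μ j) (κ j) (κ' j))
    (i : ι) (τ : Kernel (T i) (A i)) (j : ι) :
    UniversallyDistributionEquivalent (m j) (μ j) (update κ i τ j) (update κ' i τ j) := by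
  rcases eq_or_ne j i with rfl | hj
  · simp only [update_self]
    exact fun _ _ _ _ => rfl
  · simp only [update_of_ne hj]
    exact h j

end ProbabilityTheory.Kernel

section PiCompProd

variable {ι : Type*} [Fintype ι] {T A : ι → Type*} [∀ j, MeasurableSpace (T j)]
  [∀ j, MeasurableSpace (A j)]

theorem MeasureTheory.Measure.pi_compProd_eq_map (μ : ∀ j, Measure (T j))
    [∀ j, IsProbabilityMeasure (μ j)] (κ : ∀ j, Kernel (T j) (A j)) [∀ j, IsMarkovKernel (κ j)] :
    Measure.pi (fun j => μ j ⊗ₘ κ j)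
      = (Measure.pi μ ⊗ₘ Kernel.pi κ).map (MeasurableEquiv.piProdEquivProdPi T A).symm := by
  refine Measure.pi_eq fun s hs => ?_
  rw [Measure.map_apply (MeasurableEquiv.measurable _) (.univ_pi hs),
    Measure.compProd_apply (MeasurableEquiv.measurable _ (.univ_pi hs))]
  have hslice : ∀ t : ∀ j, T j, Prod.mk t ⁻¹' ((MeasurableEquiv.piProdEquivProdPi T A).symm ⁻¹'
      univ.pi s) = univ.pi fun j => Prod.mk (t j) ⁻¹' s j := fun t => by
    ext a; simp [MeasurableEquiv.piProdEquivProdPi, Equiv.arrowProdEquivProdArrow]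
  simp only [hslice, Kernel.pi_apply, Measure.pi_pi]
  rw [lintegral_fintype_prod_eq_prod μ fun j => Kernel.measurable_kernel_prodMk_left (hs j)]
  exact Finset.prod_congr rfl fun j _ => (Measure.compProd_apply (hs j)).symm

theorem integral_integral_pi_eq_integral_pi_compProd {E : Type*} [NormedAddCommGroup E]
    [NormedSpace ℝ E] (μ : ∀ j, Measure (T j)) [∀ j, IsProbabilityMeasure (μ j)]
    (κ : ∀ j, Kernel (T j) (A j)) [∀ j, IsMarkovKernel (κ j)]
    {φ : (∀ j, T j) × (∀ j, A j) → E} (hφ : Integrable φ (Measure.pi μ ⊗ₘ Kernel.pi κ)) :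
    ∫ t, ∫ a, φ (t, a) ∂(Kernel.pi κ t) ∂(Measure.pi μ)
      = ∫ p, φ (MeasurableEquiv.piProdEquivProdPi T A p) ∂(Measure.pi fun j => μ j ⊗ₘ κ j) := by
  rw [Measure.pi_compProd_eq_map, integral_map_equiv, ← Measure.integral_compProd hφ]
  simp

end PiCompProd

theorem integral_integral_pi_congr_of_universallyDistributionEquivalent {ι : Type*} [Fintype ι]
    {T A : ι → Type*} {m : ∀ j, MeasurableSpace (T j)} [mT : ∀ j, MeasurableSpace (T j)]
    [mA : ∀ j, MeasurableSpace (A j)] (hm : ∀ j, m j ≤ mT j)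
    (μ : ∀ j, Measure (T j)) [∀ j, IsProbabilityMeasure (μ j)]
    {κ κ' : ∀ j, Kernel (T j) (A j)} [∀ j, IsMarkovKernel (κ j)] [∀ j, IsMarkovKernel (κ' j)]
    (hκ : ∀ j, Kernel.UniversallyDistributionEquivalent (m j) (μ j) (κ j) (κ' j))
    {φ : (∀ j, T j) × (∀ j, A j) → ℝ}
    (hφ : Measurable[(MeasurableSpace.pi (m := m)).prod MeasurableSpace.pi] φ)
    {H : (∀ j, T j) → ℝ} (hH : Integrable H (Measure.pi μ)) (hφH : ∀ t a, ‖φ (t, a)‖ ≤ H t) :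
    ∫ t, ∫ a, φ (t, a) ∂(Kernel.pi κ t) ∂(Measure.pi μ)
      = ∫ t, ∫ a, φ (t, a) ∂(Kernel.pi κ' t) ∂(Measure.pi μ) := by
  have hle : ∀ j, (m j).prod (mA j) ≤ (mT j).prod (mA j) :=
    fun j => MeasurableSpace.prod_mono_left (mA j) (hm j)
  have hint (ν : ∀ j, Kernel (T j) (A j)) [∀ j, IsMarkovKernel (ν j)] :
      Integrable φ (Measure.pi μ ⊗ₘ Kernel.pi ν) :=
    hH.comp_fst_compProd.mono' (hφ.mono (MeasurableSpace.prod_mono_left _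
      (MeasurableSpace.pi_mono hm)) le_rfl).aestronglyMeasurable
      (Filter.Eventually.of_forall fun p => hφH p.1 p.2)
  let mP : MeasurableSpace (∀ j, T j × A j) := MeasurableSpace.pi (m := fun j => (m j).prod (mA j))
  have hcoord (j : ι) : @Measurable _ _ mP ((m j).prod (mA j)) fun p => p j :=
    @measurable_pi_apply ι (fun j => T j × A j) (fun j => (m j).prod (mA j)) j
  have he : Measurable[mP, (MeasurableSpace.pi (m := m)).prod MeasurableSpace.pi]
      (MeasurableEquiv.piProdEquivProdPi T A) :=
    Measurable.prodMk
      (@measurable_pi_lambda _ ι T mP m (fun p j => (p j).1) fun j =>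
        (@measurable_fst _ _ (m j) (mA j)).comp (hcoord j))
      (@measurable_pi_lambda _ ι A mP mA (fun p j => (p j).2) fun j =>
        (@measurable_snd _ _ (m j) (mA j)).comp (hcoord j))
  have hψ : StronglyMeasurable[mP] fun p => φ (MeasurableEquiv.piProdEquivProdPi T A p) :=
    (hφ.comp he).stronglyMeasurable
  rw [integral_integral_pi_eq_integral_pi_compProd μ κ (hint κ),
    integral_integral_pi_eq_integral_pi_compProd μ κ' (hint κ'),
    integral_trim (MeasurableSpace.pi_mono hle) hψ, integral_trim (MeasurableSpace.pi_mono hle) hψ,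
    Measure.trim_pi hle, Measure.trim_pi hle]
  simp only [fun j => (hκ j).trim_compProd_eq (hm j)]

theorem integral_integral_pi_payoff_congr_of_universallyDistributionEquivalent {ι : Type*}
    [Fintype ι] {T A : ι → Type*} {m : ∀ j, MeasurableSpace (T j)}
    [mT : ∀ j, MeasurableSpace (T j)] [mA : ∀ j, MeasurableSpace (A j)] (hm : ∀ j, m j ≤ mT j)
    (μ : ∀ j, Measure (T j)) [∀ j, IsProbabilityMeasure (μ j)]
    {κ κ' : ∀ j, Kernel (T j) (A j)} [∀ j, IsMarkovKernel (κ j)] [∀ j, IsMarkovKernel (κ' j)]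
    (hκ : ∀ j, Kernel.UniversallyDistributionEquivalent (m j) (μ j) (κ j) (κ' j)) (i : ι)
    {v : (∀ j, A j) × T i → ℝ} (hv : Measurable[(MeasurableSpace.pi (m := mA)).prod (m i)] v)
    {H : T i → ℝ} (hH : Integrable H (μ i)) (hvH : ∀ a t, |v (a, t)| ≤ H t) :
    ∫ t, ∫ a, v (a, t i) ∂(Kernel.pi κ t) ∂(Measure.pi μ)
      = ∫ t, ∫ a, v (a, t i) ∂(Kernel.pi κ' t) ∂(Measure.pi μ) :=
  integral_integral_pi_congr_of_universallyDistributionEquivalent hm μ hκ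
    (hv.comp (measurable_snd.prodMk ((@measurable_pi_apply _ _ m i).comp measurable_fst)))
    ((measurePreserving_eval μ i).integrable_comp_of_integrable hH)
    fun t a => (Real.norm_eq_abs _).trans_le (hvH a (t i))

theorem stmt16_general {n : ℕ}
    (A : Fin n → Type*) [mA : ∀ j, MeasurableSpace (A j)]
    (T : Fin n → Type*) [mT : ∀ j, MeasurableSpace (T j)]
    (lam : ∀ j, Measure (T j)) [∀ j, IsProbabilityMeasure (lam j)]
    -- countably generated sub-σ-algebras 𝓕ᵢ ⊆ 𝓣ᵢ:
    (F : ∀ j, MeasurableSpace (T j)) (hFsub : ∀ j, F j ≤ mT j)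
    -- payoff functions, 𝓑(A) ⊗ 𝓕ᵢ-measurable, continuous in actions, dominated:
    (u : ∀ i, (∀ j, A j) × T i → ℝ)
    (hum : ∀ i, Measurable[(MeasurableSpace.pi (m := mA)).prod (F i)] (u i))
    (h : ∀ i, T i → ℝ) (hint : ∀ i, Integrable (h i) (lam i))
    (hdom : ∀ i, ∀ (a : ∀ j, A j) (t : T i), |u i (a, t)| ≤ h i t)
    -- the expected payoff of a mixed strategy profile:
    (U : (i : Fin n) → (∀ j, T j → Measure (A j)) → ℝ)
    (hU : ∀ i σ, U i σ = ∫ t : ∀ j, T j,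
      (∫ a, u i (a, t i) ∂(Measure.pi fun j => σ j (t j))) ∂(@Measure.pi (Fin n) T _ mT lam))
    -- g is an 𝓕-measurable mixed strategy profile:
    (g : ∀ j, T j → Measure (A j))
    (hgp : ∀ j t, IsProbabilityMeasure (g j t))
    (hgm : ∀ j, ∀ B : Set (A j), MeasurableSet B → Measurable[F j] fun t => g j t B)
    -- g is a mixed strategy equilibrium:
    (hgeq : ∀ i, ∀ gi' : T i → Measure (A i), (∀ t, IsProbabilityMeasure (gi' t)) →
      (∀ B : Set (A i), MeasurableSet B → Measurable[mT i] fun t => gi' t B) →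
      U i (Function.update g i gi') ≤ U i g)
    -- f is a pure strategy profile:
    (f : ∀ j, T j → A j) (hfm : ∀ j, Measurable[mT j, mA j] (f j))
    -- f is universally distribution equivalent to g:
    (hude : ∀ i, ∀ E : Set (T i), MeasurableSet[F i] E → ∀ B : Set (A i), MeasurableSet B →
      lam i (E ∩ f i ⁻¹' B) = ∫⁻ t in E, g i t B ∂(lam i)) :
    -- then f is a pure strategy equilibrium:
    ∀ i, ∀ fi' : T i → A i, Measurable[mT i, mA i] fi' →
      U i (Function.update (fun j t => Measure.dirac (f j t)) i (fun t => Measure.dirac (fi' t)))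
        ≤ U i (fun j t => Measure.dirac (f j t)) := by
  intro i fi' hfi'
  -- `F` is a later binder than `mT`, so without this it would be the instance on each `T j`
  let _ : ∀ j, MeasurableSpace (T j) := mT
  let κg : ∀ j, Kernel (T j) (A j) := fun j =>
    ⟨g j, Measure.measurable_of_measurable_coe _ fun B hB => (hgm j B hB).mono (hFsub j) le_rfl⟩
  let κf : ∀ j, Kernel (T j) (A j) := fun j => Kernel.deterministic (f j) (hfm j)
  let τ : Kernel (T i) (A i) := Kernel.deterministic fi' hfi'
  have (j : Fin n) : IsMarkovKernel (κg j) := ⟨hgp j⟩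
  have hpayoff (κ κ' : ∀ j, Kernel (T j) (A j)) [∀ j, IsMarkovKernel (κ j)]
      [∀ j, IsMarkovKernel (κ' j)]
      (hκ : ∀ j, Kernel.UniversallyDistributionEquivalent (F j) (lam j) (κ j) (κ' j)) :
      U i (fun j => κ j) = U i (fun j => κ' j) := by
    rw [hU, hU]
    exact integral_integral_pi_payoff_congr_of_universallyDistributionEquivalent hFsub lam hκ i
      (hum i) (hint i) (hdom i)
  have hequiv (j : Fin n) :
      Kernel.UniversallyDistributionEquivalent (F j) (lam j) (κg j) (κf j) := fun E hE B hB => by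
    rw [Kernel.setLIntegral_deterministic_apply _ _ (hFsub j E hE) hB, hude j E hE B hB]
    rfl
  calc U i (update (fun j t => Measure.dirac (f j t)) i fun t => Measure.dirac (fi' t))
      = U i fun j => update κf i τ j := by rw [Kernel.coe_update]; rfl
    _ = U i fun j => update κg i τ j :=
        (hpayoff _ _ (Kernel.universallyDistributionEquivalent_update hequiv i τ)).symm
    _ = U i (update g i fun t => Measure.dirac (fi' t)) := by rw [Kernel.coe_update]; rfl
    _ ≤ U i g := hgeq i _ (fun t => inferInstance) fun B hB => τ.measurable_coe hB
    _ = U i fun j t => Measure.dirac (f j t) := hpayoff κg κf hequiv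

theorem stmt16 {n : ℕ}
    (A : Fin n → Type*) [∀ j, MetricSpace (A j)] [∀ j, CompactSpace (A j)]
    [mA : ∀ j, MeasurableSpace (A j)] [∀ j, BorelSpace (A j)]
    (T : Fin n → Type*) [mT : ∀ j, MeasurableSpace (T j)]
    (lam : ∀ j, Measure (T j)) [∀ j, IsProbabilityMeasure (lam j)]
    -- countably generated sub-σ-algebras 𝓕ᵢ ⊆ 𝓣ᵢ:
    (F : ∀ j, MeasurableSpace (T j)) (hFsub : ∀ j, F j ≤ mT j)
    (hFcg : ∀ j, @MeasurableSpace.CountablyGenerated (T j) (F j))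
    -- each 𝓣ᵢ is atomless:
    (hatomless : ∀ j, ∀ D : Set (T j), MeasurableSet[mT j] D → 0 < lam j D →
      ∃ E ⊆ D, MeasurableSet[mT j] E ∧ 0 < lam j E ∧ lam j E < lam j D)
    -- each 𝓣ᵢ is nowhere equivalent to 𝓕ᵢ:
    (hne : ∀ j, ∀ D : Set (T j), MeasurableSet[mT j] D → 0 < lam j D →
      ∃ D₀ ⊆ D, MeasurableSet[mT j] D₀ ∧
        ∀ D' : Set (T j), MeasurableSet[F j] D' → 0 < lam j (symmDiff D₀ (D ∩ D')))
    -- payoff functions, 𝓑(A) ⊗ 𝓕ᵢ-measurable, continuous in actions, dominated: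
    (u : ∀ i, (∀ j, A j) × T i → ℝ)
    (hum : ∀ i, Measurable[(MeasurableSpace.pi (m := mA)).prod (F i)] (u i))
    (huc : ∀ i, ∀ t : T i, Continuous fun a : ∀ j, A j => u i (a, t))
    (h : ∀ i, T i → ℝ) (hint : ∀ i, Integrable (h i) (lam i))
    (hdom : ∀ i, ∀ (a : ∀ j, A j) (t : T i), |u i (a, t)| ≤ h i t)
    -- the expected payoff of a mixed strategy profile:
    (U : (i : Fin n) → (∀ j, T j → Measure (A j)) → ℝ)
    (hU : ∀ i σ, U i σ = ∫ t : ∀ j, T j,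
      (∫ a, u i (a, t i) ∂(Measure.pi fun j => σ j (t j))) ∂(@Measure.pi (Fin n) T _ mT lam))
    -- g is an 𝓕-measurable mixed strategy profile:
    (g : ∀ j, T j → Measure (A j))
    (hgp : ∀ j t, IsProbabilityMeasure (g j t))
    (hgm : ∀ j, ∀ B : Set (A j), MeasurableSet B → Measurable[F j] fun t => g j t B)
    -- g is a mixed strategy equilibrium:
    (hgeq : ∀ i, ∀ gi' : T i → Measure (A i), (∀ t, IsProbabilityMeasure (gi' t)) →
      (∀ B : Set (A i), MeasurableSet B → Measurable[mT i] fun t => gi' t B) →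
      U i (Function.update g i gi') ≤ U i g)
    -- f is a pure strategy profile:
    (f : ∀ j, T j → A j) (hfm : ∀ j, Measurable[mT j, mA j] (f j))
    -- f is universally distribution equivalent to g:
    (hude : ∀ i, ∀ E : Set (T i), MeasurableSet[F i] E → ∀ B : Set (A i), MeasurableSet B →
      lam i (E ∩ f i ⁻¹' B) = ∫⁻ t in E, g i t B ∂(lam i)) :
    -- then f is a pure strategy equilibrium:
    ∀ i, ∀ fi' : T i → A i, Measurable[mT i, mA i] fi' →
      U i (Function.update (fun j t => Measure.dirac (f j t)) i (fun t => Measure.dirac (fi' t)))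
        ≤ U i (fun j t => Measure.dirac (f j t)) :=
  stmt16_general A (mA := mA) T (mT := mT) lam F hFsub u hum h hint hdom U hU g hgp hgm hgeq f hfm
    hude
end
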